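/- Let a and b be two distinct letters of Σ, let x ∈ Vars, and let γ := (a·x{ε}·a) ∨ (b·x{ε}·b). Then there is no sequential vset-automaton A that is synchronized for x and satisfies ⟦A⟧(d) = ⟦γ⟧(d) for every document d. -/

import Mathlib

namespace Spanners

open scoped Classical

/-! ### Spans and mappings -/

abbrev Span := ℕ × ℕ

abbrev VMapping := ℕ → Option Span

def emptyMapping : VMapping := fun _ => none

def mapDom (μ : VMapping) : Set ℕ := {x | μ x ≠ none}

/-- Two mappings are compatible if they agree on every common variable. -/
def Compatible (μ1 μ2 : VMapping) : Prop :=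
  ∀ x s1 s2, μ1 x = some s1 → μ2 x = some s2 → s1 = s2

def DisjointDom (μ1 μ2 : VMapping) : Prop :=
  ∀ x, μ1 x = none ∨ μ2 x = none

def munion (μ1 μ2 : VMapping) : VMapping := fun x =>
  match μ1 x with
  | some s => some s
  | none => μ2 x

def minsert (x : ℕ) (s : Span) (μ : VMapping) : VMapping :=
  fun y => if y = x then some s else μ y

/-- Natural join of two sets of mappings. -/
def joinSet (S1 S2 : Set VMapping) : Set VMapping :=
  {μ | ∃ μ1 ∈ S1, ∃ μ2 ∈ S2, Compatible μ1 μ2 ∧ μ = munion μ1 μ2}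

/-- Difference of two sets of mappings. -/
def diffSet (S1 S2 : Set VMapping) : Set VMapping :=
  {μ1 | μ1 ∈ S1 ∧ ∀ μ2 ∈ S2, ¬ Compatible μ1 μ2}

/-- Restriction of a mapping to a set of variables. -/
noncomputable def restrictMap (μ : VMapping) (V : Set ℕ) : VMapping :=
  fun x => if x ∈ V then μ x else none

/-- Projection of a set of mappings to a set of variables. -/
def projSet (V : Set ℕ) (S : Set VMapping) : Set VMapping :=
  {μ' | ∃ μ ∈ S, μ' = restrictMap μ V}

/-! ### Regex formulas -/

inductive RGX (Sig : Type) where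
  | empty : RGX Sig
  | eps : RGX Sig
  | letter : Sig → RGX Sig
  | union : RGX Sig → RGX Sig → RGX Sig
  | concat : RGX Sig → RGX Sig → RGX Sig
  | star : RGX Sig → RGX Sig
  | bind : ℕ → RGX Sig → RGX Sig

variable {Sig : Type}

def RGX.vars : RGX Sig → Finset ℕ
  | .empty => ∅
  | .eps => ∅
  | .letter _ => ∅
  | .union a b => a.vars ∪ b.vars
  | .concat a b => a.vars ∪ b.vars
  | .star a => a.vars
  | .bind x a => insert x a.vars

def RGX.size : RGX Sig → ℕ
  | .empty => 1
  | .eps => 1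
  | .letter _ => 1
  | .union a b => a.size + b.size + 1
  | .concat a b => a.size + b.size + 1
  | .star a => a.size + 1
  | .bind _ a => a.size + 1

/-- The schemaless semantics `⟨α⟩(d)`: `RMatch α d i j μ` means `([i,j⟩, μ) ∈ ⟨α⟩(d)`. -/
inductive RMatch : RGX Sig → List Sig → ℕ → ℕ → VMapping → Prop where
  | eps {d : List Sig} {i : ℕ} (h1 : 1 ≤ i) (h2 : i ≤ d.length + 1) :
      RMatch .eps d i i emptyMapping
  | letter {d : List Sig} {i : ℕ} {σ : Sig} (h1 : 1 ≤ i) (h2 : d[i - 1]? = some σ) :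
      RMatch (.letter σ) d i (i + 1) emptyMapping
  | unionL {a b : RGX Sig} {d : List Sig} {i j : ℕ} {μ : VMapping}
      (h : RMatch a d i j μ) : RMatch (.union a b) d i j μ
  | unionR {a b : RGX Sig} {d : List Sig} {i j : ℕ} {μ : VMapping}
      (h : RMatch b d i j μ) : RMatch (.union a b) d i j μ
  | concat {a b : RGX Sig} {d : List Sig} {i k j : ℕ} {μ1 μ2 : VMapping}
      (h1 : RMatch a d i k μ1) (h2 : RMatch b d k j μ2) (hd : DisjointDom μ1 μ2) :
      RMatch (.concat a b) d i j (munion μ1 μ2)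
  | bind {x : ℕ} {a : RGX Sig} {d : List Sig} {i j : ℕ} {μ : VMapping}
      (h : RMatch a d i j μ) (hx : μ x = none) :
      RMatch (.bind x a) d i j (minsert x (i, j) μ)
  | starNil {a : RGX Sig} {d : List Sig} {i : ℕ} (h1 : 1 ≤ i) (h2 : i ≤ d.length + 1) :
      RMatch (.star a) d i i emptyMapping
  | starCons {a : RGX Sig} {d : List Sig} {i k j : ℕ} {μ1 μ2 : VMapping}
      (h1 : RMatch a d i k μ1) (h2 : RMatch (.star a) d k j μ2) (hd : DisjointDom μ1 μ2) :
      RMatch (.star a) d i j (munion μ1 μ2)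

/-- `⟦α⟧(d)`: mappings extracted with the full span. -/
def rgxSem (α : RGX Sig) (d : List Sig) : Set VMapping :=
  {μ | RMatch α d 1 (d.length + 1) μ}

/-- Sequential regex formulas. -/
def RGX.Sequential : RGX Sig → Prop
  | .empty => True
  | .eps => True
  | .letter _ => True
  | .union a b => a.Sequential ∧ b.Sequential
  | .concat a b => a.Sequential ∧ b.Sequential ∧ Disjoint a.vars b.vars
  | .star a => a.Sequential ∧ a.vars = ∅
  | .bind x a => a.Sequential ∧ x ∉ a.vars

/-- Variable-free words over the alphabet (built from ε, letters and concatenation). -/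
inductive RGX.IsWord : RGX Sig → Prop where
  | eps : RGX.IsWord .eps
  | letter (σ : Sig) : RGX.IsWord (.letter σ)
  | concat {a b : RGX Sig} : a.IsWord → b.IsWord → RGX.IsWord (.concat a b)

/-- Functional for a set `V` of variables. -/
inductive FunctionalFor : RGX Sig → Finset ℕ → Prop where
  | word {α : RGX Sig} (h : α.IsWord) : FunctionalFor α ∅
  | union {a b : RGX Sig} {V : Finset ℕ} (ha : FunctionalFor a V) (hb : FunctionalFor b V) :
      FunctionalFor (.union a b) V
  | concat {a b : RGX Sig} {V : Finset ℕ} (V1 : Finset ℕ) (hsub : V1 ⊆ V)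
      (ha : FunctionalFor a V1) (hb : FunctionalFor b (V \ V1)) :
      FunctionalFor (.concat a b) V
  | star {a : RGX Sig} (h : FunctionalFor a ∅) : FunctionalFor (.star a) ∅
  | bind {x : ℕ} {a : RGX Sig} {V : Finset ℕ} (h : FunctionalFor a (V.erase x)) :
      FunctionalFor (.bind x a) V

def RGX.Functional (α : RGX Sig) : Prop := FunctionalFor α α.vars

/-- Disjunctive functional regex formulas: finite disjunctions of functional regex formulas. -/
inductive DisjFunctional : RGX Sig → Prop where
  | base {γ : RGX Sig} (h : γ.Functional) : DisjFunctional γ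
  | union {a b : RGX Sig} (ha : DisjFunctional a) (hb : DisjFunctional b) :
      DisjFunctional (.union a b)

/-- Number of disjuncts of a (disjunctive) regex formula. -/
def countDisjuncts : RGX Sig → ℕ
  | .union a b => countDisjuncts a + countDisjuncts b
  | _ => 1

/-- Disjunction-free regex formulas. -/
def RGX.DisjFree : RGX Sig → Prop
  | .union _ _ => False
  | .concat a b => a.DisjFree ∧ b.DisjFree
  | .star a => a.DisjFree
  | .bind _ a => a.DisjFree
  | _ => True

/-- `γ` is synchronized for `x`: no subformula `γ1 ∨ γ2` contains `x`. -/
def RGX.SyncFor : RGX Sig → ℕ → Prop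
  | .union a b, x => (x ∉ a.vars ∧ x ∉ b.vars) ∧ a.SyncFor x ∧ b.SyncFor x
  | .concat a b, x => a.SyncFor x ∧ b.SyncFor x
  | .star a, x => a.SyncFor x
  | .bind _ a, x => a.SyncFor x
  | _, _ => True

/-- Concatenation of a list of regex formulas. -/
def concatList : List (RGX Sig) → RGX Sig
  | [] => .eps
  | [α] => α
  | α :: rest => .concat α (concatList rest)

/-- Disjunction of a list of regex formulas. -/
def disjList : List (RGX Sig) → RGX Sig
  | [] => .empty
  | [α] => α
  | α :: rest => .union α (disjList rest)

/-! ### vset-automata -/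

inductive VLabel (Sig : Type) where
  | eps : VLabel Sig
  | letter : Sig → VLabel Sig
  | openv : ℕ → VLabel Sig
  | closev : ℕ → VLabel Sig
deriving DecidableEq

structure VA (Sig : Type) [DecidableEq Sig] where
  q0 : ℕ
  F : Finset ℕ
  δ : Finset (ℕ × VLabel Sig × ℕ)

variable [DecidableEq Sig]

/-- The states of a VA: the initial state and all states mentioned in `F` or in transitions. -/
def statesOf (A : VA Sig) : Finset ℕ :=
  insert A.q0 (A.F ∪ A.δ.image (fun t => t.1) ∪ A.δ.image (fun t => t.2.2))

def labelVars : VLabel Sig → Finset ℕ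
  | .openv x => {x}
  | .closev x => {x}
  | _ => ∅

/-- `Vars(A)`: the variables mentioned in the transitions of `A`. -/
def varsOf (A : VA Sig) : Finset ℕ := A.δ.biUnion (fun t => labelVars t.2.1)

/-- Total size of a VA: number of states plus number of transitions. -/
def vaSize (A : VA Sig) : ℕ := (statesOf A).card + A.δ.card

/-- `A.PathFrom p ls q`: a path (run segment) from `p` to `q` with label sequence `ls`. -/
inductive VA.PathFrom (A : VA Sig) : ℕ → List (VLabel Sig) → ℕ → Prop where
  | nil (q : ℕ) : VA.PathFrom A q [] q
  | cons {p q r : ℕ} {l : VLabel Sig} {ls : List (VLabel Sig)}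
      (h : (p, l, q) ∈ A.δ) (htail : VA.PathFrom A q ls r) : VA.PathFrom A p (l :: ls) r

/-- The word (document) read by a sequence of labels. -/
def readWord : List (VLabel Sig) → List Sig :=
  List.filterMap fun l => match l with
    | VLabel.letter σ => some σ
    | _ => none

def isLetterL : VLabel Sig → Bool
  | .letter _ => true
  | _ => false

/-- The current position in the document just before executing the `k`-th label. -/
def posAt (ls : List (VLabel Sig)) (k : ℕ) : ℕ := 1 + (ls.take k).countP isLetterL

/-- Validity of a run, given by its label sequence. -/
def ValidLabels (ls : List (VLabel Sig)) : Prop :=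
  ∀ x : ℕ,
    ls.count (VLabel.openv x) ≤ 1 ∧
    ls.count (VLabel.closev x) ≤ 1 ∧
    ((VLabel.openv x) ∈ ls ↔ (VLabel.closev x) ∈ ls) ∧
    ∀ i j : ℕ, ls[i]? = some (VLabel.openv x) → ls[j]? = some (VLabel.closev x) →
      posAt ls i ≤ posAt ls j

/-- The mapping `μ_ρ` extracted from a (valid accepting) run with label sequence `ls`. -/
def runMapping (ls : List (VLabel Sig)) : VMapping := fun x =>
  if (VLabel.openv x) ∈ ls then
    some (posAt ls (ls.idxOf (VLabel.openv x)), posAt ls (ls.idxOf (VLabel.closev x)))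
  else none

/-- `ls` is the label sequence of an accepting run of `A`. -/
def AcceptsWith (A : VA Sig) (ls : List (VLabel Sig)) : Prop :=
  ∃ qf, VA.PathFrom A A.q0 ls qf ∧ qf ∈ A.F

/-- `⟦A⟧(d)`. -/
def vaSem (A : VA Sig) (d : List Sig) : Set VMapping :=
  {μ | ∃ ls, AcceptsWith A ls ∧ readWord ls = d ∧ ValidLabels ls ∧ μ = runMapping ls}

/-- A VA is sequential if all of its accepting runs are valid. -/
def VA.Sequential (A : VA Sig) : Prop := ∀ ls, AcceptsWith A ls → ValidLabels ls

/-- A run from the initial state to `q` that is a prefix of an accepting run. -/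
def PrefixRun (A : VA Sig) (ls : List (VLabel Sig)) (q : ℕ) : Prop :=
  VA.PathFrom A A.q0 ls q ∧ ∃ ls' qf, VA.PathFrom A q ls' qf ∧ qf ∈ A.F

/-- `A` is semi-functional for the variable `x`: no state has extended configuration `d`. -/
def SemiFunctionalFor (A : VA Sig) (x : ℕ) : Prop :=
  ¬ ∃ q ls1 ls2, PrefixRun A ls1 q ∧ PrefixRun A ls2 q ∧
      (VLabel.closev x) ∈ ls1 ∧ (VLabel.openv x) ∉ ls2

def SemiFunctionalForSet (A : VA Sig) (X : Finset ℕ) : Prop :=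
  ∀ x ∈ X, SemiFunctionalFor A x

/-- Functional VA: sequential, and every accepting run opens and closes every variable. -/
def FunctionalVA (A : VA Sig) : Prop :=
  A.Sequential ∧ ∀ ls, AcceptsWith A ls → ∀ x ∈ varsOf A,
    (VLabel.openv x) ∈ ls ∧ (VLabel.closev x) ∈ ls

/-- `l` has a unique target state in `A`. -/
def UniqueTarget (A : VA Sig) (l : VLabel Sig) : Prop :=
  ∃ qt : ℕ, ∀ p q : ℕ, (p, l, q) ∈ A.δ → q = qt

/-- `A` is synchronized for the variable `x`. -/
def SyncForVA (A : VA Sig) (x : ℕ) : Prop :=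
  UniqueTarget A (VLabel.openv x) ∧ UniqueTarget A (VLabel.closev x) ∧
    ((∀ ls, AcceptsWith A ls → (VLabel.openv x) ∈ ls ∧ (VLabel.closev x) ∈ ls) ∨
     (∀ ls, AcceptsWith A ls → (VLabel.openv x) ∉ ls ∧ (VLabel.closev x) ∉ ls))

/-- `A` is the disjunctive functional VA with functional components `parts`. -/
def DisjFunctionalVAWith (A : VA Sig) (parts : List (VA Sig)) : Prop :=
  (∀ B ∈ parts, FunctionalVA B) ∧
  (parts.Pairwise fun B C => Disjoint (statesOf B) (statesOf C)) ∧
  (∀ B ∈ parts, A.q0 ∉ statesOf B) ∧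
  A.F = parts.foldr (fun B s => B.F ∪ s) (∅ : Finset ℕ) ∧
  A.δ = (parts.map (fun B => (A.q0, (VLabel.eps : VLabel Sig), B.q0))).toFinset
        ∪ parts.foldr (fun B s => B.δ ∪ s) (∅ : Finset (ℕ × VLabel Sig × ℕ))

def DisjFunctionalVA (A : VA Sig) : Prop := ∃ parts, DisjFunctionalVAWith A parts

/-! ### 3CNF formulas -/

/-- A 3CNF clause over `n` Boolean variables: a triple of literals; `(i, true)` is `xᵢ`,
`(i, false)` is `¬xᵢ`. -/
def Clause3 (n : ℕ) : Type := (Fin n × Bool) × (Fin n × Bool) × (Fin n × Bool)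

def litsOf {n : ℕ} (c : Clause3 n) : List (Fin n × Bool) := [c.1, c.2.1, c.2.2]

def clauseSat {n : ℕ} (τ : Fin n → Bool) (c : Clause3 n) : Prop :=
  ∃ l ∈ litsOf c, τ l.1 = l.2

def Sat3 {n m : ℕ} (φ : Fin m → Clause3 n) : Prop :=
  ∃ τ : Fin n → Bool, ∀ j, clauseSat τ (φ j)

end Spanners

namespace Spanners

variable {Sig : Type} [DecidableEq Sig]

/-- `γ := (a·x{ε}·a) ∨ (b·x{ε}·b)`. -/
def gammaS17 (a b : Sig) (x : ℕ) : RGX Sig :=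
  .union (.concat (.letter a) (.concat (.bind x .eps) (.letter a)))
         (.concat (.letter b) (.concat (.bind x .eps) (.letter b)))

end Spanners

namespace Spanners

variable {Sig : Type}

/-! Both `a·a` and `b·b` admit a run opening `x` after the first letter. Since `x⊢` has a unique
target state, the prefix of the first run up to `x⊢` glues onto the suffix of the second, giving an
accepting run on `a·b`; by sequentiality it is valid, so `⟦A⟧(ab)` is nonempty, whereas `⟦γ⟧(ab)`
is empty. -/

lemma exists_rMatch_letter_bind_eps_letter (c : Sig) (x : ℕ) :
    ∃ μ, RMatch (.concat (.letter c) (.concat (.bind x .eps) (.letter c))) [c, c] 1 3 μ ∧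
      μ x = some (2, 2) := by
  have hbind : RMatch (.bind x .eps) [c, c] 2 2 (minsert x (2, 2) emptyMapping) :=
    .bind (.eps (by norm_num) (by norm_num)) rfl
  refine ⟨_, .concat (.letter le_rfl rfl)
    (.concat hbind (.letter (by norm_num) rfl) fun _ => .inr rfl) fun _ => .inl rfl, ?_⟩
  simp [munion, emptyMapping, minsert]

lemma rgxSem_gammaS17_of_ne {a b : Sig} (hab : a ≠ b) (x : ℕ) :
    rgxSem (gammaS17 a b x) [a, b] = ∅ := by
  refine Set.eq_empty_of_forall_notMem fun μ h => ?_
  cases h with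
  | unionL h =>
    cases h with | concat _ h _ =>
    cases h with | concat _ h _ =>
    cases h with | letter _ hb =>
    exact hab (Option.some.inj hb).symm
  | unionR h =>
    cases h with | concat h _ _ =>
    cases h with | letter _ ha =>
    exact hab (Option.some.inj ha)

lemma readWord_append (u v : List (VLabel Sig)) :
    readWord (u ++ v) = readWord u ++ readWord v :=
  List.filterMap_append

lemma readWord_openv_cons (x : ℕ) (u : List (VLabel Sig)) :
    readWord (VLabel.openv x :: u) = readWord u := rfl

lemma length_readWord (u : List (VLabel Sig)) : (readWord u).length = u.countP isLetterL := by
  rw [readWord, List.length_filterMap_eq_countP]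
  congr 1
  funext l
  cases l <;> rfl

variable [DecidableEq Sig]

lemma VA.PathFrom.append {A : VA Sig} {p q r : ℕ} {u v : List (VLabel Sig)}
    (hu : A.PathFrom p u q) (hv : A.PathFrom q v r) : A.PathFrom p (u ++ v) r := by
  induction hu with
  | nil _ => exact hv
  | cons h _ ih => exact .cons h (ih hv)

lemma VA.PathFrom.exists_of_append {A : VA Sig} {p r : ℕ} {u v : List (VLabel Sig)}
    (h : A.PathFrom p (u ++ v) r) : ∃ q, A.PathFrom p u q ∧ A.PathFrom q v r := by
  induction u generalizing p with
  | nil => exact ⟨p, .nil p, h⟩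
  | cons l u ih =>
    cases h with
    | cons hl htail =>
      obtain ⟨q, hu, hv⟩ := ih htail
      exact ⟨q, .cons hl hu, hv⟩

lemma VA.PathFrom.splice {A : VA Sig} {l : VLabel Sig} (hl : UniqueTarget A l)
    {p p' q r : ℕ} {u₁ v₁ u₂ v₂ : List (VLabel Sig)}
    (h₁ : A.PathFrom p (u₁ ++ l :: v₁) q) (h₂ : A.PathFrom p' (u₂ ++ l :: v₂) r) :
    A.PathFrom p (u₁ ++ l :: v₂) r := by
  obtain ⟨qt, hqt⟩ := hl
  obtain ⟨_, hu₁, hlv₁⟩ := h₁.exists_of_append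
  obtain ⟨_, -, hlv₂⟩ := h₂.exists_of_append
  cases hlv₁ with
  | cons ht₁ _ =>
    cases hlv₂ with
    | cons ht₂ hv₂ =>
      obtain rfl := (hqt _ _ ht₁).trans (hqt _ _ ht₂).symm
      exact hu₁.append (.cons ht₁ hv₂)

lemma exists_eq_append_openv_of_runMapping_eq_some {ls : List (VLabel Sig)} {x i j : ℕ}
    (h : runMapping ls x = some (i, j)) :
    ∃ u v, ls = u ++ VLabel.openv x :: v ∧ (readWord u).length + 1 = i := by
  unfold runMapping at h
  split_ifs at h with hx
  obtain ⟨hi, -⟩ := Prod.mk.inj (Option.some.inj h)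
  have hlt := List.idxOf_lt_length_iff.2 hx
  refine ⟨ls.take (ls.idxOf (VLabel.openv x)), ls.drop (ls.idxOf (VLabel.openv x) + 1), ?_, ?_⟩
  · conv_lhs => rw [← List.take_append_drop (ls.idxOf (VLabel.openv x)) ls]
    rw [List.drop_eq_getElem_cons hlt, List.getElem_idxOf hlt]
  · rw [length_readWord, ← hi, posAt, Nat.add_comm]

lemma vaSem_append_nonempty_of_uniqueTarget_openv {A : VA Sig} {x : ℕ} (hseq : A.Sequential)
    (hx : UniqueTarget A (VLabel.openv x)) {u₁ v₁ u₂ v₂ : List Sig} {μ₁ μ₂ : VMapping}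
    {j₁ j₂ : ℕ} (h₁ : μ₁ ∈ vaSem A (u₁ ++ v₁)) (hμ₁ : μ₁ x = some (u₁.length + 1, j₁))
    (h₂ : μ₂ ∈ vaSem A (u₂ ++ v₂)) (hμ₂ : μ₂ x = some (u₂.length + 1, j₂)) :
    (vaSem A (u₁ ++ v₂)).Nonempty := by
  obtain ⟨ls₁, ⟨_, hp₁, -⟩, hw₁, -, rfl⟩ := h₁
  obtain ⟨ls₂, ⟨q₂, hp₂, hq₂⟩, hw₂, -, rfl⟩ := h₂
  obtain ⟨s₁, t₁, rfl, hs₁⟩ := exists_eq_append_openv_of_runMapping_eq_some hμ₁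
  obtain ⟨s₂, t₂, rfl, hs₂⟩ := exists_eq_append_openv_of_runMapping_eq_some hμ₂
  rw [readWord_append, readWord_openv_cons] at hw₁ hw₂
  have hsplit₁ := List.append_inj hw₁ (by omega)
  have hsplit₂ := List.append_inj hw₂ (by omega)
  have hacc : AcceptsWith A (s₁ ++ VLabel.openv x :: t₂) := ⟨q₂, hp₁.splice hx hp₂, hq₂⟩
  refine ⟨_, _, hacc, ?_, hseq _ hacc, rfl⟩
  rw [readWord_append, readWord_openv_cons, hsplit₁.1, hsplit₂.2]

theorem statement17 (a b : Sig) (hab : a ≠ b) (x : ℕ) :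
    ¬ ∃ A : VA Sig, A.Sequential ∧ SyncForVA A x ∧
        ∀ d : List Sig, vaSem A d = rgxSem (gammaS17 a b x) d := by
  rintro ⟨A, hseq, ⟨hopen, -, -⟩, hsem⟩
  obtain ⟨μa, hma, hμa⟩ := exists_rMatch_letter_bind_eps_letter a x
  obtain ⟨μb, hmb, hμb⟩ := exists_rMatch_letter_bind_eps_letter b x
  have ha : μa ∈ vaSem A ([a] ++ [a]) := by rw [hsem]; exact .unionL hma
  have hb : μb ∈ vaSem A ([b] ++ [b]) := by rw [hsem]; exact .unionR hmb
  have hnonempty := vaSem_append_nonempty_of_uniqueTarget_openv hseq hopen ha hμa hb hμb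
  rw [List.singleton_append, hsem, rgxSem_gammaS17_of_ne hab] at hnonempty
  exact Set.not_nonempty_empty hnonempty

end Spanners
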